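/- Let Y_1,…,Y_I be independent with Y_i = α + σ_i ε_i, ε_i i.i.d. N(0,1), I ≥ 3, and r_i = (Y_i − Ȳ)², i ≠ j. Then Cov(r_i, r_j) = 2(I−1)²(σ_i⁴+σ_j⁴)/I⁴ + 4(I−1)²σ_i²σ_j²/I⁴ − 4(I−1)∑_{k≠i,j} σ_k²(σ_i²+σ_j²)/I⁴ + 4∑_{k,l≠i,j; l<k} σ_l²σ_k²/I⁴ + 2∑_{k≠i,j} σ_k⁴/I⁴. -/

import Mathlib

/-!
Write `Y_i - Ȳ = ∑ₖ cᵢₖ εₖ`. The residuals `U = Y_i - Ȳ` and `V = Y_j - Ȳ` are then a centred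
Gaussian pair, and for such a pair `Cov(U², V²) = 2 Cov(U, V)²`: by polarization, `U² V²` and
`U V` are linear combinations of fourth and second powers of the centred Gaussians `U ± V`, `U`,
`V`, whose moments satisfy `E[W⁴] = 3 E[W²]²`. Since the `εₖ` are independent standard normals,
`Cov(U, V) = ∑ₖ cᵢₖ cⱼₖ`, and the theorem is `2 (∑ₖ cᵢₖ cⱼₖ)²` expanded.
-/

open MeasureTheory ProbabilityTheory Finset Real
open scoped NNReal

lemma integral_pow_four_gaussianReal (v : ℝ≥0) :
    ∫ x, x ^ 4 ∂gaussianReal 0 v = 3 * (v : ℝ) ^ 2 := by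
  set g : ℝ → ℝ := fun t => rexp (v * t ^ 2 / 2)
  have hmgf := iteratedDeriv_mgf_zero (X := id) (μ := gaussianReal 0 v) (by simp) 4
  simp only [mgf_id_gaussianReal, zero_mul, zero_add, Pi.pow_apply, id] at hmgf
  have d1 : deriv g = fun t => v * t * g t := by
    ext t
    rw [_root_.deriv_exp (by fun_prop)]
    simp only [deriv_div_const, deriv_const_mul_field', deriv_pow_field, Nat.cast_ofNat]
    ring
  have d2 : deriv (fun t => v * t * g t) = fun t => (v + v ^ 2 * t ^ 2) * g t := by
    ext t
    rw [deriv_fun_mul (by fun_prop) (by fun_prop), d1]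
    simp only [deriv_const_mul_id']
    ring
  have d3 : deriv (fun t => (v + v ^ 2 * t ^ 2) * g t)
      = fun t => (3 * v ^ 2 * t + v ^ 3 * t ^ 3) * g t := by
    ext t
    rw [deriv_fun_mul (by fun_prop) (by fun_prop), d1]
    simp only [deriv_const_add', deriv_const_mul_field', deriv_pow_field, Nat.cast_ofNat]
    ring
  have d4 : deriv (fun t => (3 * v ^ 2 * t + v ^ 3 * t ^ 3) * g t)
      = fun t => (3 * v ^ 2 + 6 * v ^ 3 * t ^ 2 + v ^ 4 * t ^ 4) * g t := by
    ext t
    rw [deriv_fun_mul (by fun_prop) (by fun_prop), d1, deriv_fun_add (by fun_prop) (by fun_prop)]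
    simp only [deriv_const_mul_id', deriv_const_mul_field', deriv_pow_field, Nat.cast_ofNat]
    ring
  rw [← hmgf, iteratedDeriv_succ', iteratedDeriv_succ', iteratedDeriv_succ', iteratedDeriv_succ',
    iteratedDeriv_zero, d1, d2, d3, d4]
  simp [g]

section

variable {Ω : Type*} [MeasurableSpace Ω] {P : Measure Ω}

namespace ProbabilityTheory.HasGaussianLaw

lemma integrable_pow {X : Ω → ℝ} (hX : HasGaussianLaw X P) (n : ℕ) :
    Integrable (fun ω => X ω ^ n) P := by
  have := hX.isProbabilityMeasure
  refine (hX.memLp (p := n) (by simp)).integrable_norm_pow'.mono'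
    (hX.aemeasurable.pow_const n).aestronglyMeasurable (ae_of_all _ fun ω => ?_)
  simp [norm_pow]

lemma integral_pow_four {X : Ω → ℝ} (hX : HasGaussianLaw X P) (hX0 : P[X] = 0) :
    ∫ ω, X ω ^ 4 ∂P = 3 * (∫ ω, X ω ^ 2 ∂P) ^ 2 := by
  have hlaw := hX.map_eq_gaussianReal
  rw [hX0] at hlaw
  have hvar : Var[X; P] = ∫ ω, X ω ^ 2 ∂P := variance_of_integral_eq_zero hX.aemeasurable hX0
  rw [← integral_map (f := fun x : ℝ => x ^ 4) hX.aemeasurable (by fun_prop), hlaw,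
    integral_pow_four_gaussianReal, Real.coe_toNNReal _ (variance_nonneg X P), hvar]

lemma integral_sq_mul_sq {U V : Ω → ℝ} (hUV : HasGaussianLaw (fun ω => (U ω, V ω)) P)
    (hU0 : P[U] = 0) (hV0 : P[V] = 0) :
    ∫ ω, U ω ^ 2 * V ω ^ 2 ∂P =
      (∫ ω, U ω ^ 2 ∂P) * (∫ ω, V ω ^ 2 ∂P) + 2 * (∫ ω, U ω * V ω ∂P) ^ 2 := by
  have hU := hUV.fst
  have hV := hUV.snd
  have hS := hUV.fun_add
  have hD := hUV.fun_sub
  have hS0 : P[fun ω => U ω + V ω] = 0 := by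
    rw [integral_add hU.integrable hV.integrable, hU0, hV0, add_zero]
  have hD0 : P[fun ω => U ω - V ω] = 0 := by
    rw [integral_sub hU.integrable hV.integrable, hU0, hV0, sub_zero]
  have h22 : ∫ ω, U ω ^ 2 * V ω ^ 2 ∂P = (∫ ω, (U ω + V ω) ^ 4 ∂P + ∫ ω, (U ω - V ω) ^ 4 ∂P
      - 2 * ∫ ω, U ω ^ 4 ∂P - 2 * ∫ ω, V ω ^ 4 ∂P) / 12 := by
    have hS4 := hS.integrable_pow 4
    have hD4 := hD.integrable_pow 4
    have hU4 := hU.integrable_pow 4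
    have hV4 := hV.integrable_pow 4
    rw [← integral_add (by fun_prop) (by fun_prop), ← integral_const_mul, ← integral_const_mul,
      ← integral_sub (by fun_prop) (by fun_prop), ← integral_sub (by fun_prop) (by fun_prop),
      ← integral_div]
    congr 1 with ω
    ring
  have h11 : ∫ ω, U ω * V ω ∂P = (∫ ω, (U ω + V ω) ^ 2 ∂P - ∫ ω, (U ω - V ω) ^ 2 ∂P) / 4 := by
    rw [← integral_sub (hS.integrable_pow 2) (hD.integrable_pow 2), ← integral_div]
    congr 1 with ω
    ring
  have h2 : ∫ ω, (U ω + V ω) ^ 2 ∂P + ∫ ω, (U ω - V ω) ^ 2 ∂P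
      = 2 * ∫ ω, U ω ^ 2 ∂P + 2 * ∫ ω, V ω ^ 2 ∂P := by
    rw [← integral_add (hS.integrable_pow 2) (hD.integrable_pow 2), ← integral_const_mul,
      ← integral_const_mul,
      ← integral_add ((hU.integrable_pow 2).const_mul 2) ((hV.integrable_pow 2).const_mul 2)]
    congr 1 with ω
    ring
  rw [h22, h11, hS.integral_pow_four hS0, hD.integral_pow_four hD0, hU.integral_pow_four hU0,
    hV.integral_pow_four hV0]
  linear_combination (∫ ω, (U ω + V ω) ^ 2 ∂P + ∫ ω, (U ω - V ω) ^ 2 ∂P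
    + 2 * ∫ ω, U ω ^ 2 ∂P + 2 * ∫ ω, V ω ^ 2 ∂P) / 8 * h2

end ProbabilityTheory.HasGaussianLaw

section StandardGaussian

variable {ι : Type*} {ε : ι → Ω → ℝ}

lemma integral_mul_of_iIndepFun_gaussianReal [DecidableEq ι]
    (hε : ∀ k, HasLaw (ε k) (gaussianReal 0 1) P) (hindep : iIndepFun ε P) (k l : ι) :
    ∫ ω, ε k ω * ε l ω ∂P = if k = l then 1 else 0 := by
  have hmean k : P[ε k] = 0 := by simp [(hε k).integral_eq]
  split_ifs with hkl
  · subst hkl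
    have hvar := variance_of_integral_eq_zero (hε k).aemeasurable (hmean k)
    rw [(hε k).variance_eq, variance_id_gaussianReal] at hvar
    simpa [sq] using hvar.symm
  · rw [(hindep.indepFun hkl).integral_fun_mul_eq_mul_integral
      (hε k).aemeasurable.aestronglyMeasurable (hε l).aemeasurable.aestronglyMeasurable,
      hmean, zero_mul]

lemma integral_sum_mul_sum_of_iIndepFun_gaussianReal [Fintype ι]
    (hε : ∀ k, HasLaw (ε k) (gaussianReal 0 1) P) (hindep : iIndepFun ε P) (a b : ι → ℝ) :
    ∫ ω, (∑ k, a k * ε k ω) * (∑ l, b l * ε l ω) ∂P = ∑ k, a k * b k := by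
  classical
  have hint k l : Integrable (fun ω => a k * b l * (ε k ω * ε l ω)) P :=
    ((hε k).hasGaussianLaw.memLp_two.integrable_mul (hε l).hasGaussianLaw.memLp_two).const_mul _
  simp_rw [sum_mul_sum, mul_mul_mul_comm _ (ε _ _)]
  rw [integral_finsetSum _ fun k _ => integrable_finsetSum _ fun l _ => hint k l]
  simp_rw [integral_finsetSum _ fun l _ => hint _ l, integral_const_mul,
    integral_mul_of_iIndepFun_gaussianReal hε hindep, mul_ite, mul_one, mul_zero, sum_ite_eq,
    mem_univ, if_true]

lemma hasGaussianLaw_sum_mul_prod_of_iIndepFun_gaussianReal [Fintype ι]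
    (hε : ∀ k, HasLaw (ε k) (gaussianReal 0 1) P) (hindep : iIndepFun ε P) (a b : ι → ℝ) :
    HasGaussianLaw (fun ω => (∑ k, a k * ε k ω, ∑ k, b k * ε k ω)) P := by
  have hvec := iIndepFun.hasGaussianLaw (fun k => (hε k).hasGaussianLaw) hindep
  let L : (ι → ℝ) →L[ℝ] ℝ × ℝ :=
    (∑ k, a k • ContinuousLinearMap.proj k).prod (∑ k, b k • ContinuousLinearMap.proj k)
  simpa [L] using hvec.map_fun L

lemma integral_sum_mul_eq_zero_of_gaussianReal [Fintype ι]
    (hε : ∀ k, HasLaw (ε k) (gaussianReal 0 1) P) (a : ι → ℝ) :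
    ∫ ω, ∑ k, a k * ε k ω ∂P = 0 := by
  rw [integral_finsetSum _ fun k _ => (hε k).hasGaussianLaw.integrable.const_mul (a k)]
  simp [integral_const_mul, (hε _).integral_eq]

lemma integral_sq_mul_sq_sub_of_iIndepFun_gaussianReal [Fintype ι]
    (hε : ∀ k, HasLaw (ε k) (gaussianReal 0 1) P) (hindep : iIndepFun ε P) (a b : ι → ℝ) :
    ∫ ω, (∑ k, a k * ε k ω) ^ 2 * (∑ k, b k * ε k ω) ^ 2 ∂P
      - (∫ ω, (∑ k, a k * ε k ω) ^ 2 ∂P) * (∫ ω, (∑ k, b k * ε k ω) ^ 2 ∂P)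
      = 2 * (∑ k, a k * b k) ^ 2 := by
  rw [(hasGaussianLaw_sum_mul_prod_of_iIndepFun_gaussianReal hε hindep a b).integral_sq_mul_sq
    (integral_sum_mul_eq_zero_of_gaussianReal hε a) (integral_sum_mul_eq_zero_of_gaussianReal hε b),
    integral_sum_mul_sum_of_iIndepFun_gaussianReal hε hindep]
  ring

end StandardGaussian

end

lemma sq_sum_eq_sum_sq_add_two_mul_sum_lt {ι R : Type*} [LinearOrder ι] [CommSemiring R]
    (s : Finset ι) (f : ι → R) :
    (∑ k ∈ s, f k) ^ 2 =
      ∑ k ∈ s, f k ^ 2 + 2 * ∑ l ∈ s, ∑ k ∈ s.filter (fun k => l < k), f l * f k := by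
  have hswap : ∑ l ∈ s, ∑ k ∈ s.filter (fun k => k < l), f l * f k
      = ∑ l ∈ s, ∑ k ∈ s.filter (fun k => l < k), f l * f k := by
    rw [sum_comm' (t' := s) (s' := fun k => s.filter (fun l => k < l))]
    · exact sum_congr rfl fun _ _ => sum_congr rfl fun _ _ => mul_comm _ _
    · intro l k; simp only [mem_filter]; tauto
  have hsplit l (hl : l ∈ s) : ∑ k ∈ s, f l * f k = f l ^ 2
      + ∑ k ∈ s.filter (fun k => l < k), f l * f k
      + ∑ k ∈ s.filter (fun k => k < l), f l * f k := by
    have hne : (s.erase l).filter (fun k => ¬ l < k) = s.filter (fun k => k < l) := by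
      ext k; simp only [mem_filter, mem_erase, not_lt]; grind
    have hgt : (s.erase l).filter (fun k => l < k) = s.filter (fun k => l < k) := by
      ext k; simp only [mem_filter, mem_erase]; grind
    rw [← add_sum_erase s _ hl, ← sum_filter_add_sum_filter_not (s.erase l) (fun k => l < k),
      hne, hgt, sq, add_assoc]
  rw [sq, sum_mul_sum, sum_congr rfl hsplit, sum_add_distrib, sum_add_distrib, hswap, two_mul,
    add_assoc]

lemma sub_average_eq_sum_mul {ι : Type*} [Fintype ι] [DecidableEq ι] [Nonempty ι] (α : ℝ)
    (σ e : ι → ℝ) (j : ι) :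
    α + σ j * e j - (∑ k, (α + σ k * e k)) / Fintype.card ι
      = ∑ k, ((if k = j then σ k else 0) - (Fintype.card ι : ℝ)⁻¹ * σ k) * e k := by
  have hcard : (Fintype.card ι : ℝ) ≠ 0 := by positivity
  simp only [sum_add_distrib, sum_const, card_univ, nsmul_eq_mul, sub_mul, ite_mul, zero_mul,
    sum_sub_distrib, sum_ite_eq', mem_univ, if_true, mul_assoc, ← mul_sum]
  field_simp
  ring

lemma sum_ite_sub_mul_ite_sub {ι : Type*} [Fintype ι] [DecidableEq ι] (σ : ι → ℝ) (t : ℝ)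
    {i j : ι} (hij : i ≠ j) :
    ∑ k, ((if k = i then σ k else 0) - t * σ k) * ((if k = j then σ k else 0) - t * σ k)
      = t ^ 2 * ∑ k ∈ (univ.erase i).erase j, σ k ^ 2 - t * (1 - t) * (σ i ^ 2 + σ j ^ 2) := by
  have hj : j ∈ univ.erase i := mem_erase.2 ⟨hij.symm, mem_univ j⟩
  have hrest : ∀ k ∈ (univ.erase i).erase j,
      ((if k = i then σ k else 0) - t * σ k) * ((if k = j then σ k else 0) - t * σ k)
        = t ^ 2 * σ k ^ 2 := by
    intro k hk
    obtain ⟨hkj, hki⟩ : k ≠ j ∧ k ≠ i := by simpa using hk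
    simp only [if_neg hki, if_neg hkj]
    ring
  rw [← add_sum_erase _ _ (mem_univ i), ← add_sum_erase _ _ hj, sum_congr rfl hrest, ← mul_sum]
  simp only [↓reduceIte, if_neg hij, if_neg hij.symm]
  ring

theorem covariance_of_squared_residuals_general {Ω : Type*} [MeasurableSpace Ω] (P : Measure Ω)
    [IsProbabilityMeasure P] (I : ℕ) (α : ℝ) (σ : Fin I → ℝ)
    (ε : Fin I → Ω → ℝ) (hmeas : ∀ i, Measurable (ε i))
    (hindep : iIndepFun ε P)
    (hgauss : ∀ i, Measure.map (ε i) P = gaussianReal 0 1)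
    (Y : Fin I → Ω → ℝ) (hY : ∀ i ω, Y i ω = α + σ i * ε i ω)
    (r : Fin I → Ω → ℝ) (hr : ∀ j ω, r j ω = (Y j ω - (∑ k, Y k ω) / I) ^ 2)
    (i j : Fin I) (hij : i ≠ j) :
    ∫ ω, r i ω * r j ω ∂P - (∫ ω, r i ω ∂P) * (∫ ω, r j ω ∂P) =
      2 * ((I : ℝ) - 1) ^ 2 * ((σ i) ^ 4 + (σ j) ^ 4) / (I : ℝ) ^ 4 +
        4 * ((I : ℝ) - 1) ^ 2 * (σ i) ^ 2 * (σ j) ^ 2 / (I : ℝ) ^ 4 -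
        4 * ((I : ℝ) - 1) *
          (∑ k ∈ (univ.erase i).erase j, (σ k) ^ 2 * ((σ i) ^ 2 + (σ j) ^ 2)) / (I : ℝ) ^ 4 +
        4 * (∑ l ∈ (univ.erase i).erase j,
              ∑ k ∈ ((univ.erase i).erase j).filter (fun k => l < k),
                (σ l) ^ 2 * (σ k) ^ 2) / (I : ℝ) ^ 4 +
        2 * (∑ k ∈ (univ.erase i).erase j, (σ k) ^ 4) / (I : ℝ) ^ 4 := by
  have : Nonempty (Fin I) := ⟨i⟩
  have hI : (I : ℝ) ≠ 0 := Nat.cast_ne_zero.2 i.pos.ne'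
  have hε k : HasLaw (ε k) (gaussianReal 0 1) P := ⟨(hmeas k).aemeasurable, hgauss k⟩
  have hres l ω : r l ω = (∑ k, ((if k = l then σ k else 0) - (I : ℝ)⁻¹ * σ k) * ε k ω) ^ 2 := by
    simpa [hr, hY] using congrArg (· ^ 2) (sub_average_eq_sum_mul α σ (ε · ω) l)
  have hpairs := sq_sum_eq_sum_sq_add_two_mul_sum_lt ((univ.erase i).erase j) (fun k => σ k ^ 2)
  simp only [← pow_mul, Nat.reduceMul] at hpairs
  simp only [hres]
  rw [integral_sq_mul_sq_sub_of_iIndepFun_gaussianReal hε hindep, sum_ite_sub_mul_ite_sub σ _ hij,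
    ← sum_mul]
  field_simp
  linear_combination 2 * hpairs

theorem covariance_of_squared_residuals {Ω : Type*} [MeasurableSpace Ω] (P : Measure Ω)
    [IsProbabilityMeasure P] (I : ℕ) (hI : 3 ≤ I) (α : ℝ) (σ : Fin I → ℝ)
    (hσ : ∀ i, 0 < σ i) (ε : Fin I → Ω → ℝ) (hmeas : ∀ i, Measurable (ε i))
    (hindep : iIndepFun ε P)
    (hgauss : ∀ i, Measure.map (ε i) P = gaussianReal 0 1)
    (Y : Fin I → Ω → ℝ) (hY : ∀ i ω, Y i ω = α + σ i * ε i ω)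
    (r : Fin I → Ω → ℝ) (hr : ∀ j ω, r j ω = (Y j ω - (∑ k, Y k ω) / I) ^ 2)
    (i j : Fin I) (hij : i ≠ j) :
    ∫ ω, r i ω * r j ω ∂P - (∫ ω, r i ω ∂P) * (∫ ω, r j ω ∂P) =
      2 * ((I : ℝ) - 1) ^ 2 * ((σ i) ^ 4 + (σ j) ^ 4) / (I : ℝ) ^ 4 +
        4 * ((I : ℝ) - 1) ^ 2 * (σ i) ^ 2 * (σ j) ^ 2 / (I : ℝ) ^ 4 -
        4 * ((I : ℝ) - 1) *
          (∑ k ∈ (univ.erase i).erase j, (σ k) ^ 2 * ((σ i) ^ 2 + (σ j) ^ 2)) / (I : ℝ) ^ 4 +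
        4 * (∑ l ∈ (univ.erase i).erase j,
              ∑ k ∈ ((univ.erase i).erase j).filter (fun k => l < k),
                (σ l) ^ 2 * (σ k) ^ 2) / (I : ℝ) ^ 4 +
        2 * (∑ k ∈ (univ.erase i).erase j, (σ k) ^ 4) / (I : ℝ) ^ 4 :=
  covariance_of_squared_residuals_general P I α σ ε hmeas hindep hgauss Y hY r hr i j hij
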